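/- A group G has uncountable cofinality and is Cayley bounded if and only if every left-invariant metric on G is bounded. -/
import Mathlib


open Pointwise

/-- `G` has uncountable cofinality: it is not the union of a countable
increasing chain of proper subgroups. -/
def UncountableCofinality (G : Type*) [Group G] : Prop :=
  ¬ ∃ H : ℕ → Subgroup G, Monotone H ∧ (∀ n, H n ≠ ⊤) ∧
      (⋃ n, (H n : Set G)) = Set.univ

/-- `G` is Cayley bounded: every symmetric generating set containing the identity
generates by words of some fixed finite length. -/
def CayleyBounded (G : Type*) [Group G] : Prop :=
  ∀ E : Set G, (1 : G) ∈ E → E⁻¹ = E → Subgroup.closure E = ⊤ →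
    ∃ n : ℕ, E ^ n = Set.univ

private lemma exists_mem_pow {G : Type*} [Group G] {E : Set G} (h1 : (1 : G) ∈ E)
    (hsym : E⁻¹ = E) (hgen : Subgroup.closure E = ⊤) (g : G) : ∃ n : ℕ, g ∈ E ^ n := by
  let K : Subgroup G :=
    { carrier := {g | ∃ n : ℕ, g ∈ E ^ n}
      one_mem' := ⟨0, by simp⟩
      mul_mem' := by
        rintro a b ⟨m, hm⟩ ⟨n, hn⟩
        exact ⟨m + n, by rw [pow_add]; exact Set.mul_mem_mul hm hn⟩
      inv_mem' := by
        rintro a ⟨n, hn⟩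
        refine ⟨n, ?_⟩
        have : a⁻¹ ∈ (E ^ n)⁻¹ := by simpa using hn
        rwa [← inv_pow, hsym] at this }
  have hE : E ⊆ K := fun x hx => ⟨1, by simpa using hx⟩
  have : Subgroup.closure E ≤ K := Subgroup.closure_le K |>.2 hE
  rw [hgen] at this
  exact this (Subgroup.mem_top g)

theorem uncountable_cofinality_and_cayley_bounded_iff_leftInvariant_metrics_bounded
    (G : Type*) [Group G] :
    (UncountableCofinality G ∧ CayleyBounded G) ↔
      ∀ d : G → G → ℝ,
        (∀ x y : G, d x y = 0 ↔ x = y) →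
        (∀ x y : G, d x y = d y x) →
        (∀ x y z : G, d x z ≤ d x y + d y z) →
        (∀ g x y : G, d (g * x) (g * y) = d x y) →
        ∃ C : ℝ, ∀ x y : G, d x y ≤ C := by
  classical
  constructor
  · rintro ⟨huc, hcb⟩ d hzero hsymm htri hinv
    -- balls
    set B : ℕ → Set G := fun n => {g | d 1 g ≤ n} with hB
    have hBmono : Monotone B := by
      intro m n hmn g hg
      have : (m : ℝ) ≤ (n : ℝ) := by exact_mod_cast hmn
      exact le_trans hg this
    have hd10 : ∀ g : G, d 1 g⁻¹ = d 1 g := by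
      intro g
      have : d (g * 1) (g * g⁻¹) = d 1 g⁻¹ := hinv g 1 g⁻¹
      simpa [hsymm g 1] using this.symm
    have hBsym : ∀ n, (B n)⁻¹ = B n := by
      intro n
      ext g
      simp only [Set.mem_inv, hB, Set.mem_setOf_eq, hd10]
    have hB1 : ∀ n, (1 : G) ∈ B n := by
      intro n
      simp only [hB, Set.mem_setOf_eq, (hzero 1 1).2 rfl]
      exact_mod_cast n.cast_nonneg
    have hdnn : ∀ x y : G, 0 ≤ d x y := by
      intro x y
      have := htri x y x
      rw [(hzero x x).2 rfl, hsymm y x] at this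
      linarith
    -- the subgroups
    set H : ℕ → Subgroup G := fun n => Subgroup.closure (B n) with hH
    have hHmono : Monotone H := fun m n hmn => Subgroup.closure_mono (hBmono hmn)
    have hHunion : (⋃ n, (H n : Set G)) = Set.univ := by
      refine Set.eq_univ_of_forall fun g => ?_
      refine Set.mem_iUnion.2 ⟨⌈d 1 g⌉₊, ?_⟩
      exact Subgroup.subset_closure (by
        simp only [hB, Set.mem_setOf_eq]
        exact Nat.le_ceil _)
    have : ∃ n, H n = ⊤ := by
      by_contra hc
      push_neg at hc
      exact huc ⟨H, hHmono, hc, hHunion⟩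
    obtain ⟨n, hn⟩ := this
    obtain ⟨k, hk⟩ := hcb (B n) (hB1 n) (hBsym n) hn
    -- every element of (B n)^k has d 1 · ≤ k * n
    have key : ∀ (k : ℕ) (g : G), g ∈ (B n) ^ k → d 1 g ≤ k * n := by
      intro k
      induction k with
      | zero => intro g hg; simp only [pow_zero, Set.mem_one] at hg; subst hg
                simp [(hzero (1:G) 1).2 rfl]
      | succ k ih =>
        intro g hg
        rw [pow_succ] at hg
        obtain ⟨a, ha, b, hb, rfl⟩ := hg
        have h1 : d 1 (a * b) ≤ d 1 a + d a (a * b) := htri 1 a (a * b)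
        have h2 : d a (a * b) = d 1 b := by
          have := hinv a 1 b
          simpa using this
        have h3 : d 1 b ≤ n := hb
        have h4 : d 1 a ≤ k * n := ih a ha
        push_cast
        push_cast at h4
        nlinarith
    refine ⟨k * n, fun x y => ?_⟩
    have hx : d x y = d 1 (x⁻¹ * y) := by
      have := hinv x⁻¹ x y
      simpa using this.symm
    rw [hx]
    have : x⁻¹ * y ∈ (B n) ^ k := by rw [hk]; trivial
    exact_mod_cast key k _ this
  · intro hbdd
    constructor
    · -- uncountable cofinality
      rintro ⟨H, hmono, hproper, hunion⟩
      have hex : ∀ g : G, ∃ n, g ∈ H n := by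
        intro g
        have : g ∈ ⋃ n, (H n : Set G) := hunion ▸ Set.mem_univ g
        simpa using this
      set ρ : G → ℕ := fun g => Nat.find (hex g) with hρ
      have hρ_mem : ∀ g, g ∈ H (ρ g) := fun g => Nat.find_spec (hex g)
      have hρ_le : ∀ g n, g ∈ H n → ρ g ≤ n := fun g n h => Nat.find_le h
      have hρinv : ∀ g, ρ g⁻¹ = ρ g := by
        intro g
        apply le_antisymm
        · exact hρ_le _ _ ((H (ρ g)).inv_mem (hρ_mem g))
        · have := (H (ρ g⁻¹)).inv_mem (hρ_mem g⁻¹)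
          rw [inv_inv] at this
          exact hρ_le _ _ this
      set d : G → G → ℝ := fun x y => if x = y then 0 else (ρ (x⁻¹ * y) : ℝ) + 1 with hd
      have hz : ∀ x y : G, d x y = 0 ↔ x = y := by
        intro x y
        simp only [hd]
        split
        · simpa
        · constructor
          · intro h; exfalso; have : (0:ℝ) ≤ (ρ (x⁻¹*y) : ℝ) := by positivity
            linarith
          · intro h; exact absurd h (by assumption)
      have hs : ∀ x y : G, d x y = d y x := by
        intro x y
        simp only [hd]
        by_cases h : x = y
        · simp [h]
        · rw [if_neg h, if_neg (Ne.symm h)]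
          have : y⁻¹ * x = (x⁻¹ * y)⁻¹ := by group
          rw [this, hρinv]
      have hnn : ∀ x y : G, 0 ≤ d x y := by
        intro x y
        simp only [hd]
        split
        · exact le_refl 0
        · positivity
      have ht : ∀ x y z : G, d x z ≤ d x y + d y z := by
        intro x y z
        by_cases hxz : x = z
        · rw [(hz x z).2 hxz]
          exact add_nonneg (hnn x y) (hnn y z)
        · by_cases hxy : x = y
          · subst hxy
            rw [(hz x x).2 rfl, zero_add]
          · by_cases hyz : y = z
            · subst hyz
              rw [(hz y y).2 rfl, add_zero]
            · simp only [hd, if_neg hxz, if_neg hxy, if_neg hyz]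
              have hmem : x⁻¹ * z ∈ H (max (ρ (x⁻¹ * y)) (ρ (y⁻¹ * z))) := by
                have h1 : x⁻¹ * y ∈ H (max (ρ (x⁻¹ * y)) (ρ (y⁻¹ * z))) :=
                  hmono (le_max_left _ _) (hρ_mem _)
                have h2 : y⁻¹ * z ∈ H (max (ρ (x⁻¹ * y)) (ρ (y⁻¹ * z))) :=
                  hmono (le_max_right _ _) (hρ_mem _)
                have := mul_mem h1 h2
                simpa [mul_assoc] using this
              have hb : ρ (x⁻¹ * z) ≤ max (ρ (x⁻¹ * y)) (ρ (y⁻¹ * z)) := hρ_le _ _ hmem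
              have : (ρ (x⁻¹ * z) : ℝ) ≤ (ρ (x⁻¹ * y) : ℝ) + (ρ (y⁻¹ * z) : ℝ) := by
                have := hb.trans (max_le_add_of_nonneg (Nat.zero_le _) (Nat.zero_le _))
                exact_mod_cast this
              linarith
      have hi : ∀ g x y : G, d (g * x) (g * y) = d x y := by
        intro g x y
        simp only [hd]
        have h1 : (g * x)⁻¹ * (g * y) = x⁻¹ * y := by group
        rw [h1]
        by_cases h : x = y
        · rw [if_pos (by rw [h]), if_pos h]
        · rw [if_neg (fun hc => h (mul_left_cancel hc)), if_neg h]
      obtain ⟨C, hC⟩ := hbdd d hz hs ht hi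
      apply hproper ⌈C⌉₊
      rw [Subgroup.eq_top_iff']
      intro g
      by_cases h : g = 1
      · rw [h]; exact one_mem _
      · have hle : d 1 g ≤ C := hC 1 g
        simp only [hd, inv_one, one_mul, if_neg (Ne.symm h)] at hle
        have : ρ g ≤ ⌈C⌉₊ := by
          have h2 : (ρ g : ℝ) ≤ (⌈C⌉₊ : ℝ) := by
            have := Nat.le_ceil C
            linarith
          exact_mod_cast h2
        exact hmono this (hρ_mem g)
    · -- Cayley bounded
      intro E h1 hsym hgen
      have hex : ∀ g : G, ∃ n, g ∈ E ^ n := exists_mem_pow h1 hsym hgen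
      set ℓ : G → ℕ := fun g => Nat.find (hex g) with hℓ
      have hℓ_mem : ∀ g, g ∈ E ^ (ℓ g) := fun g => Nat.find_spec (hex g)
      have hℓ_le : ∀ g n, g ∈ E ^ n → ℓ g ≤ n := fun g n h => Nat.find_le h
      have hℓ1 : ∀ g, ℓ g = 0 ↔ g = 1 := by
        intro g
        constructor
        · intro h
          have := hℓ_mem g
          rw [h, pow_zero] at this
          simpa using this
        · intro h
          subst h
          have : (1:G) ∈ E ^ 0 := by simp
          exact Nat.le_zero.1 (hℓ_le _ _ this)
      have hℓinv : ∀ g, ℓ g⁻¹ = ℓ g := by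
        have key : ∀ g : G, ℓ g⁻¹ ≤ ℓ g := by
          intro g
          refine hℓ_le _ _ ?_
          have : g⁻¹ ∈ (E ^ (ℓ g))⁻¹ := by simpa using hℓ_mem g
          rwa [← inv_pow, hsym] at this
        intro g
        refine le_antisymm (key g) ?_
        have := key g⁻¹
        rwa [inv_inv] at this
      have hℓmul : ∀ a b : G, ℓ (a * b) ≤ ℓ a + ℓ b := by
        intro a b
        refine hℓ_le _ _ ?_
        rw [pow_add]
        exact Set.mul_mem_mul (hℓ_mem a) (hℓ_mem b)
      set d : G → G → ℝ := fun x y => (ℓ (x⁻¹ * y) : ℝ) with hd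
      have hz : ∀ x y : G, d x y = 0 ↔ x = y := by
        intro x y
        simp only [hd, Nat.cast_eq_zero, hℓ1]
        constructor
        · intro h; exact inv_injective (mul_eq_one_iff_eq_inv.1 h)
        · intro h; simp [h]
      have hs : ∀ x y : G, d x y = d y x := by
        intro x y
        simp only [hd]
        have : y⁻¹ * x = (x⁻¹ * y)⁻¹ := by group
        rw [this, hℓinv]
      have ht : ∀ x y z : G, d x z ≤ d x y + d y z := by
        intro x y z
        simp only [hd]
        have : x⁻¹ * z = (x⁻¹ * y) * (y⁻¹ * z) := by group
        rw [this]
        exact_mod_cast hℓmul (x⁻¹ * y) (y⁻¹ * z)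
      have hi : ∀ g x y : G, d (g * x) (g * y) = d x y := by
        intro g x y
        simp only [hd]
        congr 2
        group
      obtain ⟨C, hC⟩ := hbdd d hz hs ht hi
      refine ⟨⌈C⌉₊, ?_⟩
      apply Set.eq_univ_of_forall
      intro g
      have : d 1 g ≤ C := hC 1 g
      simp only [hd, inv_one, one_mul] at this
      have hle : ℓ g ≤ ⌈C⌉₊ := by
        have : (ℓ g : ℝ) ≤ (⌈C⌉₊ : ℝ) := this.trans (Nat.le_ceil C)
        exact_mod_cast this
      exact Set.pow_subset_pow_right h1 hle (hℓ_mem g)
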